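/- Let p be an odd prime with 3 | (p-1), let ω ∈ F_p be a primitive third root of unity, and let C be the cyclic code of length 3p over F_p with generator polynomial g(x) = (x-1)^5 (x-ω)^3 (x-ω^2)^2. Then the minimum Hamming distance of C equals 6. -/

import Mathlib

open Polynomial

/-- The cyclic code of length `n` over `F` with generator polynomial `g`
(with `g ∣ x^n - 1`), viewed as the set of coefficient vectors `c` whose
associated polynomial is divisible by `g`. -/
def cyclicCode {F : Type*} [Field F] (n : ℕ) (g : Polynomial F) :
    Set (Fin n → F) :=
  {c | g ∣ ∑ i : Fin n, C (c i) * X ^ (i : ℕ)}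

/-- Hamming weight of a vector. -/
def hammingWt {F : Type*} [Zero F] [DecidableEq F] {n : ℕ} (x : Fin n → F) : ℕ :=
  (Finset.univ.filter fun i => x i ≠ 0).card

/-!
Split a word `c` of length `3p` into its three polyphase components,
`c(x) = ∑_{r<3} x^r F_r(x^3)` with `deg F_r < p`, so that `wt c = ∑ wt F_r`. In characteristic
`p`, a nonzero polynomial of degree `< p` divisible by `(x - 1)^t` has more than `t` nonzero
coefficients (differentiate, or divide by `x`, and induct). Pull out the largest common power,
`F_r = (x - 1)^t Q_r`, so that `a_r = Q_r(1)` is not identically zero. As `x^3 - 1` is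
separable, `(x - ζ)^e ∣ c` with `e > t` at a cube root of unity `ζ` forces `∑ ζ^r a_r = 0`.
The multiplicities `5, 3, 2` at `1, ω, ω^2` leave three cases: `t ≥ 5`; `3 ≤ t ≤ 4` with two
nonzero `a_r`; `t = 2` with all three nonzero. Each gives weight at least `6`, which
`(x^3 - 1)^5` attains: its coefficients are `±1, ±5, ±10`, and `p ≥ 7`.
-/

namespace Polynomial

section CommSemiring

variable {R : Type*} [CommSemiring R]

theorem card_support_X_mul (f : R[X]) : (X * f).support.card = f.support.card := by
  have : (X * f).support = f.support.map (addRightEmbedding 1) := by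
    ext (_ | n) <;> simp [coeff_X_mul]
  rw [this, Finset.card_map]

theorem card_support_derivative_lt {f : R[X]} (h0 : f.coeff 0 ≠ 0) :
    (derivative f).support.card < f.support.card := by
  have hsub : (derivative f).support.map (addRightEmbedding 1) ⊆ f.support.erase 0 := by
    intro n hn
    obtain ⟨k, hk, rfl⟩ := Finset.mem_map.1 hn
    exact Finset.mem_erase.2 ⟨k.succ_ne_zero, of_mem_support_derivative hk⟩
  calc (derivative f).support.card
      = ((derivative f).support.map (addRightEmbedding 1)).card := (Finset.card_map _).symm
    _ ≤ (f.support.erase 0).card := Finset.card_le_card hsub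
    _ < f.support.card := Finset.card_erase_lt_of_mem (mem_support_iff.2 h0)

theorem card_support_expand {m : ℕ} (hm : 0 < m) (f : R[X]) :
    (expand R m f).support.card = f.support.card := by
  have : (expand R m f).support = f.support.image (m * ·) := by
    ext n
    by_cases hmn : m ∣ n
    · obtain ⟨k, rfl⟩ := hmn
      simp [coeff_expand_mul' hm, Nat.mul_left_cancel_iff hm]
    · simp only [mem_support_iff, coeff_expand hm, if_neg hmn, Finset.mem_image]
      exact iff_of_false (not_not.2 rfl) fun ⟨k, _, hk⟩ => hmn ⟨k, hk.symm⟩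
  rw [this, Finset.card_image_of_injective _ (mul_right_injective₀ hm.ne')]

end CommSemiring

section IsDomain

variable {R : Type*} [CommRing R] [IsDomain R]

theorem exists_X_sub_C_pow_mul_and_eval_ne_zero {ι : Type*} [Fintype ι] {F : ι → R[X]}
    (hF : F ≠ 0) (a : R) :
    ∃ (t : ℕ) (Q : ι → R[X]),
      (∀ i, F i = (X - C a) ^ t * Q i) ∧ ∃ i, (Q i).eval a ≠ 0 := by
  classical
  obtain ⟨i₀, hi₀, hmin⟩ := Finset.exists_min_image (Finset.univ.filter (F · ≠ 0))
    (fun i => (F i).rootMultiplicity a)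
    (by simpa [Finset.filter_nonempty_iff, funext_iff] using hF)
  set t := (F i₀).rootMultiplicity a
  have hdvd : ∀ i, (X - C a) ^ t ∣ F i := by
    intro i
    by_cases hi : F i = 0
    · simp [hi]
    · exact (pow_dvd_pow _ (hmin i (by simpa using hi))).trans (pow_rootMultiplicity_dvd _ _)
  choose Q hQ using hdvd
  refine ⟨t, Q, hQ, i₀, fun hroot => ?_⟩
  obtain ⟨q, hq, hndvd⟩ :=
    exists_eq_pow_rootMultiplicity_mul_and_not_dvd (F i₀) (by simpa using hi₀) a
  obtain rfl : Q i₀ = q :=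
    mul_left_cancel₀ (pow_ne_zero t (X_sub_C_ne_zero a)) ((hQ i₀).symm.trans hq)
  exact hndvd (dvd_iff_isRoot.2 hroot)

variable (p : ℕ) [CharP R p]

theorem derivative_ne_zero_of_natDegree_lt {f : R[X]} (hf0 : f.natDegree ≠ 0)
    (hfp : f.natDegree < p) : derivative f ≠ 0 := by
  intro h
  have hcoeff := congrArg (coeff · (f.natDegree - 1)) h
  have hsub := Nat.sub_add_cancel (Nat.one_le_iff_ne_zero.2 hf0)
  simp only [coeff_derivative, hsub, coeff_zero] at hcoeff
  have hcast : ((f.natDegree - 1 : ℕ) : R) + 1 = (f.natDegree : ℕ) := by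
    rw [← Nat.cast_add_one, hsub]
  rw [hcast, mul_eq_zero, CharP.cast_eq_zero_iff R p] at hcoeff
  rcases hcoeff with h | h
  · exact leadingCoeff_ne_zero.2 (by rintro rfl; simp at hf0) h
  · exact absurd (Nat.le_of_dvd (Nat.pos_of_ne_zero hf0) h) (by omega)

theorem lt_card_support_of_X_sub_one_pow_dvd {f : R[X]} (hf : f ≠ 0) (hfp : f.natDegree < p)
    {t : ℕ} (ht : (X - 1) ^ t ∣ f) : t < f.support.card := by
  induction hd : f.natDegree using Nat.strong_induction_on generalizing f t with
  | _ d ih =>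
  obtain _ | s := t
  · exact Finset.card_pos.2 (nonempty_support_iff.2 hf)
  by_cases h0 : f.coeff 0 = 0
  · obtain ⟨g, rfl⟩ := X_dvd_iff.2 h0
    have hg : g ≠ 0 := right_ne_zero_of_mul hf
    have hcop : IsCoprime ((X - 1 : R[X]) ^ (s + 1)) X :=
      IsCoprime.pow_left ⟨-1, 1, by ring⟩
    rw [natDegree_X_mul hg] at hd hfp
    rw [card_support_X_mul]
    exact ih g.natDegree (by omega) hg (by omega) (hcop.dvd_of_dvd_mul_left ht) rfl
  · have hroot : (X - C 1 : R[X]) ∣ f := by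
      rw [C_1]; exact (dvd_pow_self _ s.succ_ne_zero).trans ht
    have hd0 : f.natDegree ≠ 0 := by
      intro hdeg
      rw [eq_C_of_natDegree_eq_zero hdeg, dvd_iff_isRoot, IsRoot, eval_C] at hroot
      exact h0 hroot
    have hder := ih _ (hd ▸ natDegree_derivative_lt hd0)
      (derivative_ne_zero_of_natDegree_lt p hd0 hfp) ((natDegree_derivative_lt hd0).trans hfp)
      (pow_sub_one_dvd_derivative_of_pow_dvd ht) rfl
    have := card_support_derivative_lt h0
    omega

theorem card_support_X_sub_one_pow {n : ℕ} (hn : n < p) :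
    ((X - 1 : R[X]) ^ n).support.card = n + 1 := by
  have hX : (X - 1 : R[X]) ≠ 0 := by simpa using X_sub_C_ne_zero (1 : R)
  have hdeg : ((X - 1 : R[X]) ^ n).natDegree = n := by
    rw [← C_1, natDegree_pow, natDegree_X_sub_C, mul_one]
  refine le_antisymm ?_
    (lt_card_support_of_X_sub_one_pow_dvd p (pow_ne_zero _ hX) (hdeg.symm ▸ hn) dvd_rfl)
  calc _ ≤ (Finset.range (((X - 1 : R[X]) ^ n).natDegree + 1)).card :=
        Finset.card_le_card supp_subset_range_natDegree_succ
    _ = n + 1 := by rw [Finset.card_range, hdeg]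

end IsDomain

theorem sum_pow_mul_eval_one_eq_zero_of_pow_dvd {K : Type*} [Field K] {m t : ℕ}
    (hm : (m : K) ≠ 0) {ζ : K} (hζ : ζ ^ m = 1) (Q : Fin m → K[X])
    (h : (X - C ζ) ^ (t + 1) ∣ ∑ r : Fin m, X ^ (r : ℕ) * expand K m ((X - 1) ^ t * Q r)) :
    ∑ r : Fin m, ζ ^ (r : ℕ) * (Q r).eval 1 = 0 := by
  have hsep : Squarefree (X ^ m - 1 : K[X]) := by
    simpa using (separable_X_pow_sub_C 1 hm one_ne_zero).squarefree
  obtain ⟨u, hu⟩ : X - C ζ ∣ (X ^ m - 1 : K[X]) := by simp [dvd_iff_isRoot, hζ]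
  have hu_ne : u.eval ζ ≠ 0 := fun hroot => by
    obtain ⟨v, rfl⟩ := dvd_iff_isRoot.2 hroot
    exact not_isUnit_X_sub_C ζ (hsep _ ⟨v, by rw [hu]; ring⟩)
  have hsum : ∑ r : Fin m, X ^ (r : ℕ) * expand K m ((X - 1) ^ t * Q r)
      = (X - C ζ) ^ t * (u ^ t * ∑ r : Fin m, X ^ (r : ℕ) * expand K m (Q r)) := by
    simp only [map_mul, map_pow, map_sub, expand_X, map_one, Finset.mul_sum]
    exact Finset.sum_congr rfl fun r _ => by rw [hu, mul_pow]; ring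
  rw [hsum, pow_succ, mul_dvd_mul_iff_left (pow_ne_zero t (X_sub_C_ne_zero ζ)), dvd_iff_isRoot,
    IsRoot, eval_mul, eval_pow, mul_eq_zero] at h
  simpa [eval_finsetSum, expand_eval, hζ, pow_ne_zero t hu_ne] using h

end Polynomial

section VecToPoly

variable {R : Type*} [CommRing R] {n : ℕ}

noncomputable def vecToPoly (c : Fin n → R) : R[X] :=
  ∑ i : Fin n, C (c i) * X ^ (i : ℕ)

theorem coeff_vecToPoly (c : Fin n → R) (i : Fin n) : (vecToPoly c).coeff i = c i := by
  simp [vecToPoly, Fin.val_inj]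

theorem degree_vecToPoly_lt (c : Fin n → R) : (vecToPoly c).degree < n :=
  degree_sum_fin_lt c

theorem vecToPoly_eq_zero_iff {c : Fin n → R} : vecToPoly c = 0 ↔ c = 0 := by
  refine ⟨fun h => funext fun i => ?_, fun h => by simp [h, vecToPoly]⟩
  rw [← coeff_vecToPoly c i, h, coeff_zero, Pi.zero_apply]

theorem vecToPoly_coeff {f : R[X]} (hf : f.degree < n) :
    vecToPoly (fun i : Fin n => f.coeff i) = f := by
  ext k
  by_cases hk : k < n
  · exact coeff_vecToPoly _ ⟨k, hk⟩
  · have hnk : (n : WithBot ℕ) ≤ k := by exact_mod_cast not_lt.1 hk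
    rw [coeff_eq_zero_of_degree_lt ((degree_vecToPoly_lt _).trans_le hnk),
      coeff_eq_zero_of_degree_lt (hf.trans_le hnk)]

theorem card_support_vecToPoly [DecidableEq R] (c : Fin n → R) :
    (vecToPoly c).support.card = hammingWt c := by
  have : (vecToPoly c).support = (Finset.univ.filter fun i => c i ≠ 0).map Fin.valEmbedding := by
    ext k
    by_cases hk : k < n
    · obtain ⟨i, rfl⟩ : ∃ i : Fin n, (i : ℕ) = k := ⟨⟨k, hk⟩, rfl⟩
      simp [coeff_vecToPoly, Fin.val_inj]
    · simp only [mem_support_iff, Finset.mem_map, Fin.valEmbedding_apply]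
      refine iff_of_false (not_not.2 (coeff_eq_zero_of_degree_lt
        ((degree_vecToPoly_lt _).trans_le (by exact_mod_cast not_lt.1 hk)))) ?_
      rintro ⟨i, -, rfl⟩
      exact hk i.isLt
  rw [this, Finset.card_map, hammingWt]

end VecToPoly

section Polyphase

variable {R : Type*} [CommRing R] {m n : ℕ}

def polyphaseEquiv (m n : ℕ) : Fin n × Fin m ≃ Fin (m * n) :=
  finProdFinEquiv.trans (finCongr (Nat.mul_comm n m))

theorem polyphaseEquiv_apply_val (j : Fin n) (r : Fin m) :
    (polyphaseEquiv m n (j, r) : ℕ) = r + m * j :=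
  rfl

def polyphase (c : Fin (m * n) → R) (r : Fin m) : Fin n → R :=
  fun j => c (polyphaseEquiv m n (j, r))

theorem vecToPoly_eq_sum_expand_polyphase (c : Fin (m * n) → R) :
    vecToPoly c = ∑ r : Fin m, X ^ (r : ℕ) * expand R m (vecToPoly (polyphase c r)) := by
  rw [vecToPoly, ← (polyphaseEquiv m n).sum_comp, Fintype.sum_prod_type_right]
  refine Finset.sum_congr rfl fun r _ => ?_
  simp only [vecToPoly, polyphase, map_sum, map_mul, expand_C, map_pow, expand_X, Finset.mul_sum,
    polyphaseEquiv_apply_val, pow_add, pow_mul]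
  exact Finset.sum_congr rfl fun j _ => by ring

theorem hammingWt_eq_sum_polyphase [DecidableEq R] (c : Fin (m * n) → R) :
    hammingWt c = ∑ r : Fin m, hammingWt (polyphase c r) := by
  simp only [hammingWt, Finset.card_filter]
  rw [← (polyphaseEquiv m n).sum_comp, Fintype.sum_prod_type_right]
  rfl

theorem polyphase_ne_zero {c : Fin (m * n) → R} (hc : c ≠ 0) : polyphase c ≠ 0 := by
  contrapose! hc
  ext i
  obtain ⟨⟨j, r⟩, rfl⟩ := (polyphaseEquiv m n).surjective i
  exact congrFun (congrFun hc r) j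

end Polyphase

theorem two_le_card_ne_zero_of_sum_eq_zero {ι M : Type*} [Fintype ι]
    [AddCommMonoid M] [DecidableEq M] {a : ι → M} (ha : a ≠ 0) (hsum : ∑ i, a i = 0) :
    2 ≤ (Finset.univ.filter (a · ≠ 0)).card := by
  obtain ⟨i, hi⟩ := Function.ne_iff.1 ha
  by_contra! hcard
  have hsub : Finset.univ.filter (a · ≠ 0) ⊆ {i} := fun j hj =>
    Finset.mem_singleton.2 (Finset.card_le_one.1 (by omega) j hj i (by simpa using hi))
  have hsingle : ∑ j, a j = a i := Finset.sum_eq_single i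
    (fun j _ hji => by_contra fun hj => hji (Finset.mem_singleton.1 (hsub (by simpa using hj))))
    (by simp)
  exact hi (hsingle.symm.trans hsum)

theorem six_le_sum_of_vanishing {K : Type*} [Field K] {ω : K} (hω : ω ^ 2 + ω + 1 = 0)
    (h3 : (3 : K) ≠ 0) {a : Fin 3 → K} (ha : a ≠ 0) {t : ℕ} {w : Fin 3 → ℕ}
    (hw : ∀ r, a r ≠ 0 → t < w r) (h₁ : t < 5 → ∑ r, a r = 0)
    (h₂ : t < 3 → ∑ r : Fin 3, ω ^ (r : ℕ) * a r = 0)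
    (h₃ : t < 2 → ∑ r : Fin 3, (ω ^ 2) ^ (r : ℕ) * a r = 0) :
    6 ≤ ∑ r, w r := by
  classical
  set N := (Finset.univ.filter (a · ≠ 0)).card
  have hN : (t + 1) * N ≤ ∑ r, w r := calc
    (t + 1) * N = N • (t + 1) := by rw [smul_eq_mul, mul_comm]
    _ ≤ ∑ r ∈ Finset.univ.filter (a · ≠ 0), w r :=
      Finset.card_nsmul_le_sum _ _ _ fun r hr => hw r (Finset.mem_filter.1 hr).2
    _ ≤ ∑ r, w r := Finset.sum_le_sum_of_subset (Finset.filter_subset _ _)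
  have hN₁ : 1 ≤ N :=
    Finset.card_pos.2 (by simpa [Finset.filter_nonempty_iff, funext_iff] using ha)
  have hN₂ (ht : t < 5) : 2 ≤ N := two_le_card_ne_zero_of_sum_eq_zero ha (h₁ ht)
  have hshape (ht : t < 3) : a 0 = ω * a 2 ∧ a 1 = ω ^ 2 * a 2 := by
    have e₁ := h₁ (by omega)
    have e₂ := h₂ ht
    simp only [Fin.sum_univ_three, Fin.val_zero, Fin.val_one, Fin.val_two, pow_zero, pow_one,
      one_mul] at e₁ e₂
    have hω1 : (1 : K) - ω ≠ 0 := fun h => h3 (by linear_combination hω + (ω + 2) * h)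
    have e : (1 - ω) * (a 1 - ω ^ 2 * a 2) = 0 := by
      linear_combination e₁ - e₂ + a 2 * (ω - 1) * hω
    have e' := sub_eq_zero.1 ((mul_eq_zero.1 e).resolve_left hω1)
    exact ⟨by linear_combination e₁ - e' - a 2 * hω, e'⟩
  have hω0 : ω ≠ 0 := fun h => by simp [h] at hω
  have ha₂ (ht : t < 3) : a 2 ≠ 0 := fun h => ha (funext fun r => by
    obtain ⟨h₀, h₁⟩ := hshape ht
    fin_cases r <;> simp [h₀, h₁, h])
  have hN₃ (ht : t < 3) : 3 ≤ N := by
    obtain ⟨h₀, h₁⟩ := hshape ht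
    have hall : ∀ r, a r ≠ 0 := by
      intro r; fin_cases r <;> simp [h₀, h₁, ha₂ ht, hω0]
    simp [N, hall]
  have hN₀ : ¬ t < 2 := fun ht => by
    obtain ⟨h₀, h₁⟩ := hshape (by omega)
    have e₃ := h₃ ht
    simp only [Fin.sum_univ_three, Fin.val_zero, Fin.val_one, Fin.val_two, pow_zero, pow_one,
      one_mul] at e₃
    have h₂ : 3 * ω * a 2 = 0 := by
      linear_combination e₃ - h₀ - ω ^ 2 * h₁ - 2 * a 2 * ω * (ω - 1) * hω
    exact ha₂ (by omega) (by simpa [h3, hω0] using h₂)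
  rcases lt_or_ge t 3 with ht | ht
  · obtain rfl : t = 2 := by omega
    have := hN₃ ht
    omega
  rcases lt_or_ge t 5 with ht' | ht'
  · nlinarith [hN₂ ht']
  · nlinarith

theorem mem_cyclicCode_iff {K : Type*} [Field K] {n : ℕ} {g : K[X]} {c : Fin n → K} :
    c ∈ cyclicCode n g ↔ g ∣ vecToPoly c :=
  Iff.rfl

theorem X_pow_three_sub_one_eq {R : Type*} [CommRing R] {ω : R} (hω : ω ^ 2 + ω + 1 = 0) :
    (X ^ 3 - 1 : R[X]) = (X - 1) * (X - C ω) * (X - C (ω ^ 2)) := by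
  have hC : C ω ^ 2 + C ω + 1 = 0 := by simpa using congrArg C hω
  rw [map_pow]
  linear_combination (X ^ 2 - C ω * X + C ω - 1) * hC

section CubeRootCode

variable {K : Type*} [Field K] [DecidableEq K] {p : ℕ} [CharP K p] {ω : K}

theorem six_le_hammingWt (hp : 3 < p) (hω : ω ^ 2 + ω + 1 = 0) {c : Fin (3 * p) → K}
    (hc : c ≠ 0) (hg : (X - 1) ^ 5 * (X - C ω) ^ 3 * (X - C (ω ^ 2)) ^ 2 ∣ vecToPoly c) :
    6 ≤ hammingWt c := by
  have h3 : ((3 : ℕ) : K) ≠ 0 := by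
    rw [Ne, CharP.cast_eq_zero_iff K p]
    exact fun h => absurd (Nat.le_of_dvd (by norm_num) h) (by omega)
  have hF : (fun r => vecToPoly (polyphase c r)) ≠ 0 := fun h =>
    polyphase_ne_zero hc (funext fun r => vecToPoly_eq_zero_iff.1 (congrFun h r))
  obtain ⟨t, Q, hFQ, r₀, hr₀⟩ := exists_X_sub_C_pow_mul_and_eval_ne_zero hF 1
  rw [C_1] at hFQ
  have hP : vecToPoly c = ∑ r : Fin 3, X ^ (r : ℕ) * expand K 3 ((X - 1) ^ t * Q r) := by
    simp only [vecToPoly_eq_sum_expand_polyphase, ← hFQ]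
  have hvan {ζ : K} (hζ : ζ ^ 3 = 1) {e : ℕ} (he : t < e)
      (hdvd : (X - C ζ) ^ e ∣ vecToPoly c) : ∑ r : Fin 3, ζ ^ (r : ℕ) * (Q r).eval 1 = 0 :=
    sum_pow_mul_eval_one_eq_zero_of_pow_dvd h3 hζ Q (hP ▸ (pow_dvd_pow _ he).trans hdvd)
  have hw (r : Fin 3) (hr : (Q r).eval 1 ≠ 0) : t < hammingWt (polyphase c r) := by
    have hFr : vecToPoly (polyphase c r) ≠ 0 := by
      rw [hFQ]
      exact mul_ne_zero (pow_ne_zero _ (by simpa using X_sub_C_ne_zero (1 : K)))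
        fun h => hr (by simp [h])
    rw [← card_support_vecToPoly]
    exact lt_card_support_of_X_sub_one_pow_dvd p hFr
      ((natDegree_lt_iff_degree_lt hFr).2 (degree_vecToPoly_lt _)) ⟨Q r, hFQ r⟩
  have hω3 : ω ^ 3 = 1 := by linear_combination (ω - 1) * hω
  rw [hammingWt_eq_sum_polyphase]
  refine six_le_sum_of_vanishing hω (by exact_mod_cast h3) (a := fun r => (Q r).eval 1)
    (Function.ne_iff.2 ⟨r₀, hr₀⟩) hw (fun ht => ?_) (fun ht => hvan hω3 ht ?_)
    (fun ht => hvan (by rw [← pow_mul, pow_mul', hω3, one_pow]) ht ((dvd_mul_left _ _).trans hg))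
  · simpa using hvan (one_pow 3) ht
      (by simpa using (dvd_mul_of_dvd_left (dvd_mul_right _ _) _).trans hg)
  · exact (dvd_mul_of_dvd_left (dvd_mul_left _ _) _).trans hg

theorem exists_mem_cyclicCode_hammingWt_eq_six (hp : 5 < p) (hω : ω ^ 2 + ω + 1 = 0) :
    ∃ c ∈ cyclicCode (3 * p) ((X - 1) ^ 5 * (X - C ω) ^ 3 * (X - C (ω ^ 2)) ^ 2),
      c ≠ 0 ∧ hammingWt c = 6 := by
  have hX : (X - 1 : K[X]) ≠ 0 := by simpa using X_sub_C_ne_zero (1 : K)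
  set q := expand K 3 ((X - 1) ^ 5)
  have hq : vecToPoly (fun i : Fin (3 * p) => q.coeff i) = q := by
    refine vecToPoly_coeff ((degree_le_natDegree).trans_lt ?_)
    rw [natDegree_expand, natDegree_pow, ← C_1, natDegree_X_sub_C]
    exact_mod_cast (by omega : 5 * 1 * 3 < 3 * p)
  refine ⟨fun i => q.coeff i, ?_, ?_, ?_⟩
  · rw [mem_cyclicCode_iff, hq]
    have : q = (X ^ 3 - 1) ^ 5 := by simp [q]
    rw [this, X_pow_three_sub_one_eq hω, mul_pow, mul_pow]
    exact mul_dvd_mul (mul_dvd_mul dvd_rfl (pow_dvd_pow _ (by norm_num)))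
      (pow_dvd_pow _ (by norm_num))
  · rw [Ne, ← vecToPoly_eq_zero_iff, hq]
    exact (expand_ne_zero (by norm_num)).2 (pow_ne_zero _ hX)
  · rw [← card_support_vecToPoly, hq, card_support_expand (by norm_num),
      card_support_X_sub_one_pow p hp]

end CubeRootCode

theorem stmt10_general (p : ℕ) [Fact p.Prime] (h3 : 3 ∣ p - 1)
    (ω : ZMod p) (hω3 : ω ^ 3 = 1) (hω1 : ω ≠ 1) :
    IsLeast {w : ℕ | ∃ c ∈ cyclicCode (3 * p)
        ((X - 1) ^ 5 * (X - C ω) ^ 3 * (X - C (ω ^ 2)) ^ 2),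
      c ≠ 0 ∧ hammingWt c = w} 6 := by
  have hp : 7 ≤ p := by
    have hprime := Fact.out (p := p.Prime)
    have : p ≠ 4 := by rintro rfl; norm_num at hprime
    have := hprime.two_le
    omega
  have hω : ω ^ 2 + ω + 1 = 0 :=
    (mul_eq_zero.1 (by linear_combination hω3 : (ω - 1) * (ω ^ 2 + ω + 1) = 0)).resolve_left
      (sub_ne_zero.2 hω1)
  refine ⟨exists_mem_cyclicCode_hammingWt_eq_six (by omega) hω, ?_⟩
  rintro w ⟨c, hc, hc0, rfl⟩
  exact six_le_hammingWt (by omega) hω hc0 hc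

theorem stmt10 (p : ℕ) [Fact p.Prime] (hodd : Odd p) (h3 : 3 ∣ p - 1)
    (ω : ZMod p) (hω3 : ω ^ 3 = 1) (hω1 : ω ≠ 1) :
    IsLeast {w : ℕ | ∃ c ∈ cyclicCode (3 * p)
        ((X - 1) ^ 5 * (X - C ω) ^ 3 * (X - C (ω ^ 2)) ^ 2),
      c ≠ 0 ∧ hammingWt c = w} 6 :=
  stmt10_general p h3 ω hω3 hω1
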